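/- Fix non-negative integers v1', v2' with 0 < v1' + v2' ≤ b. Then J1 = J2, where J1 = Σ_{0 ≤ v1 ≤ v1', 0 ≤ v2 ≤ v2'} (−1)^{v1+v2} v^{(v1'+v2'−1)(v1−v2)} [b choose v1][b choose v2][b−v2'−v1 choose v1'−v1][b−v1'−v2 choose v2'−v2] and J2 is the analogous sum with [b choose v1][b choose v2] replaced by [b choose v1−1][b choose v2−1]. -/

import Mathlib

/-!
With `K = w₁ + w₂ - 1` the weight `v ^ (K (x - y))` splits, so `J₁` and `J₂` are each a product of
a sum over `x` and a sum over `y`. Reflecting the upper index,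
`[b - w₂ - x choose w₁ - x] = (-1)^(w₁ - x) [K - b choose w₁ - x]`, turns each factor into a
`q`-Vandermonde sum (in `v` for `x`, in `v⁻¹` for `y`). This gives
`J₁ = (-1)^(w₁ + w₂) v^((w₁ - w₂) b) [K choose w₁][K choose w₂]`, and the same with `w₁ - 1`,
`w₂ - 1` for `J₂`. As `K ≥ 0`, the symmetry `[K choose r] = [K choose K - r]` matches the products.
-/

noncomputable section

/-- The indeterminate `v`. -/
def v : RatFunc ℚ := RatFunc.X

/-- Quantum integer `[r] = (v^r - v^{-r})/(v - v⁻¹)`. -/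
def qint (r : ℤ) : RatFunc ℚ := (v ^ r - v ^ (-r)) / (v - v⁻¹)

/-- Quantum factorial `[n]!`. -/
def qfact (n : ℕ) : RatFunc ℚ := ∏ i ∈ Finset.range n, qint ((i : ℤ) + 1)

/-- Gaussian binomial coefficient `[m choose r]`, zero for `r < 0`. -/
def qbinom (m r : ℤ) : RatFunc ℚ :=
  if r < 0 then 0
  else (∏ i ∈ Finset.range r.toNat, qint (m - (i : ℤ))) / qfact r.toNat

/-- The double sum `J₁` of the paper (for parameters `b`, `w₁`, `w₂`). -/
def J1 (b : ℤ) (w1 w2 : ℕ) : RatFunc ℚ :=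
  ∑ x ∈ Finset.range (w1 + 1), ∑ y ∈ Finset.range (w2 + 1),
    (-1 : RatFunc ℚ) ^ (x + y) * v ^ (((w1 : ℤ) + (w2 : ℤ) - 1) * ((x : ℤ) - (y : ℤ))) *
      qbinom b (x : ℤ) * qbinom b (y : ℤ) *
      qbinom (b - (w2 : ℤ) - (x : ℤ)) ((w1 : ℤ) - (x : ℤ)) *
      qbinom (b - (w1 : ℤ) - (y : ℤ)) ((w2 : ℤ) - (y : ℤ))

/-- The double sum `J₂`, with `[b choose x][b choose y]` replaced by
`[b choose x−1][b choose y−1]`. -/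
def J2 (b : ℤ) (w1 w2 : ℕ) : RatFunc ℚ :=
  ∑ x ∈ Finset.range (w1 + 1), ∑ y ∈ Finset.range (w2 + 1),
    (-1 : RatFunc ℚ) ^ (x + y) * v ^ (((w1 : ℤ) + (w2 : ℤ) - 1) * ((x : ℤ) - (y : ℤ))) *
      qbinom b ((x : ℤ) - 1) * qbinom b ((y : ℤ) - 1) *
      qbinom (b - (w2 : ℤ) - (x : ℤ)) ((w1 : ℤ) - (x : ℤ)) *
      qbinom (b - (w1 : ℤ) - (y : ℤ)) ((w2 : ℤ) - (y : ℤ))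

open Finset

lemma v_ne_zero : v ≠ 0 := RatFunc.X_ne_zero

lemma intDegree_v_zpow (n : ℤ) : (v ^ n).intDegree = n := by
  have hnat (k : ℕ) : (v ^ k).intDegree = k := by
    rw [v, ← RatFunc.algebraMap_X, ← map_pow, RatFunc.intDegree_polynomial,
      Polynomial.natDegree_X_pow]
  obtain ⟨k, rfl | rfl⟩ := Int.eq_nat_or_neg n
  · rw [zpow_natCast, hnat]
  · rw [zpow_neg, RatFunc.intDegree_inv, zpow_natCast, hnat]

lemma v_zpow_sub_v_zpow_neg_ne_zero {r : ℤ} (hr : r ≠ 0) : v ^ r - v ^ (-r) ≠ 0 := by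
  intro h
  have h2r : v ^ (r + r) = v ^ (0 : ℤ) := by
    rw [zpow_add₀ v_ne_zero]
    nth_rw 1 [sub_eq_zero.mp h]
    rw [← zpow_add₀ v_ne_zero, neg_add_cancel]
  have := congrArg RatFunc.intDegree h2r
  rw [intDegree_v_zpow, intDegree_v_zpow] at this
  omega

lemma qint_zero : qint 0 = 0 := by simp [qint]

lemma qint_neg (r : ℤ) : qint (-r) = -qint r := by
  rw [qint, qint, neg_neg, ← neg_div, neg_sub]

lemma qint_ne_zero {r : ℤ} (hr : r ≠ 0) : qint r ≠ 0 := by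
  have hden : v - v⁻¹ = v ^ (1 : ℤ) - v ^ (-1 : ℤ) := by rw [zpow_one, zpow_neg_one]
  rw [qint, hden]
  exact div_ne_zero (v_zpow_sub_v_zpow_neg_ne_zero hr) (v_zpow_sub_v_zpow_neg_ne_zero one_ne_zero)

lemma qint_eq_add (m r : ℤ) : qint m = v ^ (-r) * qint (m - r) + v ^ (m - r) * qint r := by
  simp only [qint, mul_div_assoc', ← add_div, mul_sub, ← zpow_add₀ v_ne_zero]
  ring_nf

lemma qfact_ne_zero (n : ℕ) : qfact n ≠ 0 :=
  prod_ne_zero_iff.mpr fun i _ => qint_ne_zero (by omega)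

def qDescFactorial (m : ℤ) (k : ℕ) : RatFunc ℚ := ∏ i ∈ range k, qint (m - i)

lemma qDescFactorial_succ (m : ℤ) (k : ℕ) :
    qDescFactorial m (k + 1) = qDescFactorial m k * qint (m - k) :=
  prod_range_succ _ _

lemma qDescFactorial_succ' (m : ℤ) (k : ℕ) :
    qDescFactorial m (k + 1) = qint m * qDescFactorial (m - 1) k := by
  rw [qDescFactorial, prod_range_succ', mul_comm, qDescFactorial]
  congr 1
  · simp
  · refine prod_congr rfl fun i _ => ?_
    push_cast; ring_nf

lemma qDescFactorial_add (m : ℤ) (k l : ℕ) :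
    qDescFactorial m (k + l) = qDescFactorial m k * qDescFactorial (m - k) l := by
  rw [qDescFactorial, prod_range_add, qDescFactorial, qDescFactorial]
  congr 1
  refine prod_congr rfl fun i _ => ?_
  push_cast; ring_nf

lemma qDescFactorial_self (n : ℕ) : qDescFactorial n n = qfact n := by
  rw [qDescFactorial, qfact, ← prod_range_reflect]
  refine prod_congr rfl fun i hi => ?_
  rw [mem_range] at hi
  congr 1
  omega

lemma qDescFactorial_eq_zero {n : ℤ} {k : ℕ} (h0 : 0 ≤ n) (h : n < k) : qDescFactorial n k = 0 :=
  prod_eq_zero (i := n.toNat) (mem_range.mpr (by omega))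
    (by rw [Int.toNat_of_nonneg h0, sub_self, qint_zero])

lemma qDescFactorial_reflect (m : ℤ) (k : ℕ) :
    qDescFactorial m k = (-1) ^ k * qDescFactorial (k - m - 1) k := by
  rw [qDescFactorial, qDescFactorial, ← prod_range_reflect,
    show (-1 : RatFunc ℚ) ^ k = ∏ _i ∈ range k, -1 by simp, ← prod_mul_distrib]
  refine prod_congr rfl fun i hi => ?_
  rw [mem_range] at hi
  rw [neg_one_mul, ← qint_neg]
  congr 1
  omega

lemma qfact_eq_qDescFactorial_mul {n k : ℕ} (h : k ≤ n) :
    qfact n = qDescFactorial n k * qfact (n - k) := by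
  obtain ⟨l, rfl⟩ := Nat.exists_eq_add_of_le h
  rw [Nat.add_sub_cancel_left, ← qDescFactorial_self, ← qDescFactorial_self, Nat.cast_add,
    qDescFactorial_add, add_sub_cancel_left]

lemma qbinom_natCast (m : ℤ) (k : ℕ) : qbinom m k = qDescFactorial m k / qfact k := by
  simp [qbinom, qDescFactorial]

lemma qbinom_of_neg {m r : ℤ} (h : r < 0) : qbinom m r = 0 := by simp [qbinom, h]

lemma qbinom_zero_right (m : ℤ) : qbinom m 0 = 1 := by simp [qbinom, qfact]

lemma qbinom_eq_zero_of_lt {n : ℤ} {k : ℕ} (h0 : 0 ≤ n) (h : n < k) : qbinom n k = 0 := by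
  rw [qbinom_natCast, qDescFactorial_eq_zero h0 h, zero_div]

lemma qbinom_reflect (m : ℤ) (k : ℕ) : qbinom m k = (-1) ^ k * qbinom (k - m - 1) k := by
  rw [qbinom_natCast, qbinom_natCast, qDescFactorial_reflect, mul_div_assoc]

lemma qbinom_eq_qfact_div {n k : ℕ} (h : k ≤ n) :
    qbinom n k = qfact n / (qfact k * qfact (n - k)) := by
  rw [qbinom_natCast, qfact_eq_qDescFactorial_mul h, mul_div_mul_right _ _ (qfact_ne_zero _)]

lemma qbinom_symm (n : ℕ) (r : ℤ) : qbinom n r = qbinom n (n - r) := by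
  rcases lt_or_ge r 0 with hr | hr
  · rw [qbinom_of_neg hr, ← Int.toNat_of_nonneg (by omega : (0 : ℤ) ≤ n - r),
      qbinom_eq_zero_of_lt (Int.natCast_nonneg n) (by omega)]
  rcases lt_or_ge (n : ℤ) r with hn | hn
  · rw [qbinom_of_neg (by omega : (n : ℤ) - r < 0), ← Int.toNat_of_nonneg hr,
      qbinom_eq_zero_of_lt (Int.natCast_nonneg n) (by omega)]
  obtain ⟨k, rfl⟩ := Int.eq_ofNat_of_zero_le hr
  have hk : k ≤ n := by omega
  rw [← Nat.cast_sub hk, qbinom_eq_qfact_div hk, qbinom_eq_qfact_div (Nat.sub_le n k),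
    Nat.sub_sub_self hk, mul_comm]

lemma qbinom_pascal (m r : ℤ) :
    qbinom m r = v ^ (-r) * qbinom (m - 1) r + v ^ (m - r) * qbinom (m - 1) (r - 1) := by
  rcases lt_trichotomy r 0 with hr | rfl | hr
  · simp [qbinom_of_neg hr, qbinom_of_neg (by omega : r - 1 < 0)]
  · simp [qbinom_zero_right, qbinom_of_neg (by norm_num : (-1 : ℤ) < 0)]
  obtain ⟨k, rfl⟩ : ∃ k : ℕ, r = k + 1 := ⟨(r - 1).toNat, by omega⟩
  rw [add_sub_cancel_right, ← Nat.cast_succ, qbinom_natCast, qbinom_natCast, qbinom_natCast,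
    qDescFactorial_succ', qDescFactorial_succ, qfact, prod_range_succ, ← qfact,
    qint_eq_add m (k + 1)]
  have := qfact_ne_zero k
  have := qint_ne_zero (by omega : (k : ℤ) + 1 ≠ 0)
  push_cast
  field_simp
  ring_nf

def vandermondeSum (n : ℕ) (b d : ℤ) : RatFunc ℚ :=
  ∑ x ∈ range (n + 1), v ^ (d * x - b * ((n : ℤ) - x)) * qbinom b x * qbinom d ((n : ℤ) - x)

lemma vandermondeSum_zero_left (n : ℕ) (d : ℤ) : vandermondeSum n 0 d = qbinom d n := by
  rw [vandermondeSum, sum_eq_single 0]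
  · simp [qbinom_zero_right]
  · intro x _ hx
    rw [qbinom_eq_zero_of_lt le_rfl (by omega), mul_zero, zero_mul]
  · simp

lemma vandermondeSum_succ (m : ℕ) (b d : ℤ) :
    vandermondeSum (m + 1) (b + 1) d =
      v ^ (-((m : ℤ) + 1)) * vandermondeSum (m + 1) b d +
        v ^ (b + d - m) * vandermondeSum m b d := by
  set g : ℕ → RatFunc ℚ := fun x => v ^ (d * x - (b + 1) * ((m : ℤ) + 1 - x) + (b + 1 - x)) *
    qbinom b ((x : ℤ) - 1) * qbinom d ((m : ℤ) + 1 - x) with hg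
  have hpascal (x : ℕ) : v ^ (d * x - (b + 1) * ((m : ℤ) + 1 - x)) * qbinom (b + 1) x *
        qbinom d ((m : ℤ) + 1 - x) =
      v ^ (-((m : ℤ) + 1)) * (v ^ (d * x - b * ((m : ℤ) + 1 - x)) * qbinom b x *
        qbinom d ((m : ℤ) + 1 - x)) + g x := by
    have e1 : v ^ (d * x - (b + 1) * ((m : ℤ) + 1 - x)) * v ^ (-(x : ℤ)) =
        v ^ (-((m : ℤ) + 1)) * v ^ (d * x - b * ((m : ℤ) + 1 - x)) := by
      simp only [← zpow_add₀ v_ne_zero]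
      ring_nf
    rw [qbinom_pascal (b + 1), add_sub_cancel_right, hg]
    linear_combination (qbinom b x * qbinom d ((m : ℤ) + 1 - x)) * e1 +
      (qbinom b ((x : ℤ) - 1) * qbinom d ((m : ℤ) + 1 - x)) * (zpow_add₀ v_ne_zero _ _).symm
  have hshift (x : ℕ) : g (x + 1) = v ^ (b + d - m) *
      (v ^ (d * x - b * ((m : ℤ) - x)) * qbinom b x * qbinom d ((m : ℤ) - x)) := by
    simp only [hg, Nat.cast_add, Nat.cast_one, add_sub_add_right_eq_sub, add_sub_cancel_right]
    rw [← mul_assoc, ← mul_assoc, ← zpow_add₀ v_ne_zero]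
    congr 3
    ring
  have hg0 : g 0 = 0 := by simp [hg, qbinom_of_neg]
  simp only [vandermondeSum, Nat.cast_add, Nat.cast_one, hpascal]
  rw [sum_add_distrib, ← mul_sum, sum_range_succ' g, hg0, add_zero]
  simp only [hshift, ← mul_sum]

lemma vandermondeSum_eq (n : ℕ) (b d : ℤ) : vandermondeSum n b d = qbinom (b + d) n := by
  induction n generalizing b with
  | zero => simp [vandermondeSum, qbinom_zero_right]
  | succ m ih =>
    have hstep (b : ℤ) : vandermondeSum (m + 1) (b + 1) d - qbinom (b + 1 + d) (m + 1 : ℕ) =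
        v ^ (-((m : ℤ) + 1)) * (vandermondeSum (m + 1) b d - qbinom (b + d) (m + 1 : ℕ)) := by
      rw [vandermondeSum_succ, ih, qbinom_pascal (b + 1 + d)]
      push_cast
      ring_nf
    suffices h : vandermondeSum (m + 1) b d - qbinom (b + d) (m + 1 : ℕ) = 0 from sub_eq_zero.mp h
    induction b using Int.induction_on with
    | zero => rw [vandermondeSum_zero_left, zero_add, sub_self]
    | succ k hk => rw [hstep, hk, mul_zero]
    | pred k hk =>
      have h := hstep (-k - 1)
      rw [sub_add_cancel, hk] at h
      exact (mul_eq_zero.mp h.symm).resolve_left (zpow_ne_zero _ v_ne_zero)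

lemma sum_zpow_mul_qbinom_mul_qbinom {t : RatFunc ℚ} (ht : t = v ∨ t = v⁻¹) (n : ℕ)
    (b d : ℤ) :
    ∑ x ∈ range (n + 1), t ^ ((b + d) * x) * qbinom b x * qbinom d ((n : ℤ) - x) =
      t ^ ((n : ℤ) * b) * qbinom (b + d) n := by
  rcases ht with rfl | rfl
  · rw [← vandermondeSum_eq, vandermondeSum, mul_sum]
    refine sum_congr rfl fun x _ => ?_
    rw [show (b + d) * (x : ℤ) = n * b + (d * x - b * (n - x)) by ring, zpow_add₀ v_ne_zero]
    ring
  · -- reverse the order of summation in the Vandermonde sum for `(d, b)`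
    rw [add_comm b, ← vandermondeSum_eq, vandermondeSum, mul_sum, ← sum_range_reflect]
    refine sum_congr rfl fun x hx => ?_
    rw [mem_range] at hx
    rw [show ((n + 1 - 1 - x : ℕ) : ℤ) = n - x by omega, sub_sub_cancel, inv_zpow', inv_zpow',
      show -((d + b) * ((n : ℤ) - x)) = -(n * b) + (b * x - d * (n - x)) by ring,
      zpow_add₀ v_ne_zero]
    ring

lemma neg_one_pow_mul_qbinom_sub (b c : ℤ) {n x : ℕ} (hx : x ≤ n) :
    (-1) ^ x * qbinom (b - c - x) ((n : ℤ) - x) =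
      (-1) ^ n * qbinom (n + c - 1 - b) ((n : ℤ) - x) := by
  rw [← Nat.cast_sub hx, qbinom_reflect, ← mul_assoc, ← pow_add, Nat.add_sub_cancel' hx,
    Nat.cast_sub hx]
  ring_nf

lemma sum_neg_one_pow_mul_qbinom {t : RatFunc ℚ} (ht : t = v ∨ t = v⁻¹) (b c : ℤ) (n : ℕ) :
    ∑ x ∈ range (n + 1),
        (-1) ^ x * t ^ ((n + c - 1) * x) * qbinom b x * qbinom (b - c - x) ((n : ℤ) - x) =
      (-1) ^ n * t ^ ((n : ℤ) * b) * qbinom (n + c - 1) n := by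
  have hsum := sum_zpow_mul_qbinom_mul_qbinom ht n b (n + c - 1 - b)
  rw [add_sub_cancel] at hsum
  rw [mul_assoc, ← hsum, mul_sum]
  refine sum_congr rfl fun x hx => ?_
  linear_combination (t ^ (((n : ℤ) + c - 1) * x) * qbinom b x) *
    neg_one_pow_mul_qbinom_sub b c (Nat.lt_succ_iff.mp (mem_range.mp hx))

lemma sum_neg_one_pow_mul_qbinom_sub_one {t : RatFunc ℚ} (ht : t = v ∨ t = v⁻¹) (b c : ℤ)
    (n : ℕ) :
    ∑ x ∈ range (n + 1),
        (-1) ^ x * t ^ ((n + c - 1) * x) * qbinom b ((x : ℤ) - 1) *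
          qbinom (b - c - x) ((n : ℤ) - x) =
      (-1) ^ n * t ^ ((n + c - 1) + (n - 1) * b) * qbinom (n + c - 1) ((n : ℤ) - 1) := by
  have ht0 : t ≠ 0 := by rcases ht with rfl | rfl <;> simp [v_ne_zero]
  cases n with
  | zero => simp [qbinom_of_neg]
  | succ m =>
    rw [sum_range_succ', Nat.cast_zero, zero_sub, qbinom_of_neg (by norm_num), mul_zero, zero_mul,
      add_zero]
    have hterm (x : ℕ) : (-1) ^ (x + 1) * t ^ (((m + 1 : ℕ) + c - 1) * (x + 1 : ℕ)) *
          qbinom b ((x + 1 : ℕ) - 1 : ℤ) *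
          qbinom (b - c - (x + 1 : ℕ)) ((m + 1 : ℕ) - (x + 1 : ℕ) : ℤ) =
        -t ^ ((m : ℤ) + c) * ((-1) ^ x * t ^ ((m + (c + 1) - 1) * x) * qbinom b x *
          qbinom (b - (c + 1) - x) ((m : ℤ) - x)) := by
      push_cast
      rw [show ((m : ℤ) + 1 + c - 1) * (x + 1) = (m + c) + (m + (c + 1) - 1) * x by ring,
        zpow_add₀ ht0 ((m : ℤ) + c), add_sub_cancel_right, add_sub_add_right_eq_sub,
        show b - c - ((x : ℤ) + 1) = b - (c + 1) - x by ring]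
      ring
    simp only [hterm, ← mul_sum, sum_neg_one_pow_mul_qbinom ht b (c + 1) m]
    push_cast
    rw [show (m : ℤ) + 1 + c - 1 + (m + 1 - 1) * b = (m + c) + m * b by ring,
      zpow_add₀ ht0 ((m : ℤ) + c),
      add_sub_cancel_right, show (m : ℤ) + (c + 1) - 1 = m + 1 + c - 1 by ring]
    ring

lemma sum_sum_neg_one_pow_zpow_sub (K : ℤ) (m n : ℕ) (φ A B : ℕ → RatFunc ℚ) :
    ∑ x ∈ range (m + 1), ∑ y ∈ range (n + 1),
        (-1) ^ (x + y) * v ^ (K * ((x : ℤ) - y)) * φ x * φ y * A x * B y =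
      (∑ x ∈ range (m + 1), (-1) ^ x * v ^ (K * x) * φ x * A x) *
        ∑ y ∈ range (n + 1), (-1) ^ y * v⁻¹ ^ (K * y) * φ y * B y := by
  rw [sum_mul_sum]
  refine sum_congr rfl fun x _ => sum_congr rfl fun y _ => ?_
  rw [pow_add, mul_sub, zpow_sub₀ v_ne_zero, inv_zpow', zpow_neg, div_eq_mul_inv]
  ring

lemma J1_eq (b : ℤ) (w1 w2 : ℕ) :
    J1 b w1 w2 = (-1) ^ (w1 + w2) * v ^ (((w1 : ℤ) - w2) * b) *
      (qbinom ((w1 : ℤ) + w2 - 1) w1 * qbinom ((w1 : ℤ) + w2 - 1) w2) := by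
  rw [J1, sum_sum_neg_one_pow_zpow_sub, sum_neg_one_pow_mul_qbinom (.inl rfl),
    show (w1 : ℤ) + w2 - 1 = w2 + w1 - 1 by ring, sum_neg_one_pow_mul_qbinom (.inr rfl),
    pow_add, sub_mul, zpow_sub₀ v_ne_zero, inv_zpow', zpow_neg, div_eq_mul_inv]
  ring

lemma J2_eq (b : ℤ) (w1 w2 : ℕ) :
    J2 b w1 w2 = (-1) ^ (w1 + w2) * v ^ (((w1 : ℤ) - w2) * b) *
      (qbinom ((w1 : ℤ) + w2 - 1) ((w1 : ℤ) - 1) *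
        qbinom ((w1 : ℤ) + w2 - 1) ((w2 : ℤ) - 1)) := by
  rw [J2, sum_sum_neg_one_pow_zpow_sub, sum_neg_one_pow_mul_qbinom_sub_one (.inl rfl),
    show (w1 : ℤ) + w2 - 1 = w2 + w1 - 1 by ring, sum_neg_one_pow_mul_qbinom_sub_one (.inr rfl),
    inv_zpow', pow_add, show ((w1 : ℤ) - w2) * b =
      (w2 + w1 - 1 + (w1 - 1) * b) + -(w2 + w1 - 1 + (w2 - 1) * b) by ring,
    zpow_add₀ v_ne_zero (w2 + w1 - 1 + (w1 - 1) * b)]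
  ring

theorem J1_eq_J2_general (b : ℤ) (w1 w2 : ℕ) (hpos : 0 < w1 + w2) :
    J1 b w1 w2 = J2 b w1 w2 := by
  obtain ⟨n, hn⟩ : ∃ n : ℕ, (w1 : ℤ) + w2 - 1 = n := ⟨w1 + w2 - 1, by omega⟩
  rw [J1_eq, J2_eq, hn, qbinom_symm n w1, qbinom_symm n w2,
    show (n : ℤ) - w1 = w2 - 1 by omega, show (n : ℤ) - w2 = w1 - 1 by omega,
    mul_comm (qbinom n _)]

/-- for 0 < w1 + w2 <= b (with b >= 1), J1 = J2. -/
theorem J1_eq_J2 (b : ℤ) (hb : 1 ≤ b) (w1 w2 : ℕ) (hpos : 0 < w1 + w2)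
    (hle : (w1 : ℤ) + (w2 : ℤ) ≤ b) :
    J1 b w1 w2 = J2 b w1 w2 :=
  J1_eq_J2_general b w1 w2 hpos
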